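/- Let k ≥ 1 and n ≥ 1. Substituting t_j = (−1)^{j−1}·e_j(x₁,…,x_k) (where e_j is the j-th elementary symmetric polynomial in variables x₁,…,x_k) into the generalized Lucas polynomial G_{k,n}(t₁,…,t_k) yields the power sum symmetric polynomial p_n(x₁,…,x_k) = x₁ⁿ + ⋯ + x_kⁿ. That is, the GLPs are the power sum symmetric polynomials written on the elementary symmetric polynomial basis. -/

import Mathlib

open Finset MvPolynomial

/-- The set of partitions `α ⊢ n` with parts at most `k`, encoded as tuples
`α = (α₁, …, α_k) ∈ ℕ^k` (0-indexed) with `∑ j, (j+1)·α_j = n`. -/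
def partitions (k n : ℕ) : Finset (Fin k → ℕ) :=
  (Fintype.piFinset fun _ : Fin k => Finset.range (n + 1)).filter
    fun α => ∑ j : Fin k, (j.1 + 1) * α j = n

/-- The generalized Lucas polynomial
`G_{k,n} = ∑_{α ⊢ n} (|α|!/(α₁!⋯α_k!))·(n/|α|)·t^α` for `n ≥ 1`, and `G_{k,0} = k`.
Its coefficients are integers; it is written here in `ℚ[t₁,…,t_k]`. -/
noncomputable def G (k n : ℕ) : MvPolynomial (Fin k) ℚ :=
  if n = 0 then (k : MvPolynomial (Fin k) ℚ)
  else
    ∑ α ∈ partitions k n,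
      C ((Nat.multinomial Finset.univ α : ℚ) * ((n : ℚ) / ((∑ i, α i : ℕ) : ℚ))) *
        ∏ j, X j ^ α j

/-!
Write `H_m = ∑_{α ⊢ m} (|α|! / ∏ α_j!) t^α`. Removing one part `j` from a partition gives the
multinomial recurrence `|α|! / ∏ α_i! = ∑_{α_j ≠ 0} (|α| - 1)! / ((α_j - 1)! ∏_{i ≠ j} α_i!)`,
and weighting it by `j` instead of `1` produces the factor `n / |α|` of `G`; hence
`H_m = ∑_j t_j H_{m-j}` and `G_n = ∑_j j t_j H_{n-j}`. After the substitution
`t_j = (-1)^(j-1) e_j`, the first recurrence says that `∑ H_m z^m` is the inverse of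
`E(z) = ∑ (-1)^i e_i z^i = ∏ (1 - x_i z)`, and Newton's identities in the form
`E(z) ∑_{n ≥ 1} p_n z^n = ∑ (-1)^(m+1) m e_m z^m` turn the second recurrence into `p_n`.
-/

theorem Nat.sum_add_one_mul_multinomial {α : Type*} [DecidableEq α] {s : Finset α} {a : α}
    (ha : a ∈ s) (f : α → ℕ) :
    (∑ i ∈ s, f i + 1) * Nat.multinomial s f =
      (f a + 1) * Nat.multinomial s (f + Pi.single a 1) := by
  set g : α → ℕ := f + Pi.single a 1
  have hsum : ∑ i ∈ s, g i = ∑ i ∈ s, f i + 1 := by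
    simp [g, Finset.sum_add_distrib, ha]
  have hprod : ∏ i ∈ s, (g i).factorial = (f a + 1) * ∏ i ∈ s, (f i).factorial := by
    have hg : ∀ i ∈ s.erase a, (g i).factorial = (f i).factorial := fun i hi => by
      simp [g, Finset.ne_of_mem_erase hi]
    rw [← Finset.mul_prod_erase s _ ha, ← Finset.mul_prod_erase s _ ha,
      Finset.prod_congr rfl hg]
    simp [g, Nat.factorial_succ, mul_assoc]
  apply Nat.eq_of_mul_eq_mul_left (Finset.prod_pos fun i _ => (f i).factorial_pos)
  calc (∏ i ∈ s, (f i).factorial) * ((∑ i ∈ s, f i + 1) * Nat.multinomial s f)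
      = (∑ i ∈ s, f i + 1).factorial := by
        rw [Nat.factorial_succ, ← Nat.multinomial_spec]; ring
    _ = (∏ i ∈ s, (f i).factorial) * ((f a + 1) * Nat.multinomial s g) := by
        rw [← hsum, ← Nat.multinomial_spec, hprod]; ring

theorem sub_single_one_add_single_one {ι : Type*} [DecidableEq ι] {α : ι → ℕ} {j : ι}
    (hj : α j ≠ 0) : α - Pi.single j 1 + Pi.single j 1 = α := by
  refine tsub_add_cancel_of_le fun i => ?_
  by_cases hi : i = j
  · subst hi; simpa using Nat.one_le_iff_ne_zero.mpr hj
  · simp [hi]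

theorem Nat.sum_mul_multinomial_sub_single {ι : Type*} [Fintype ι] [DecidableEq ι]
    {α : ι → ℕ} {j : ι} (hj : α j ≠ 0) :
    (∑ i, α i) * Nat.multinomial univ (α - Pi.single j 1) = α j * Nat.multinomial univ α := by
  obtain ⟨β, rfl⟩ : ∃ β : ι → ℕ, α = β + Pi.single j 1 :=
    ⟨_, (sub_single_one_add_single_one hj).symm⟩
  simpa [Finset.sum_add_distrib] using Nat.sum_add_one_mul_multinomial (mem_univ j) β

theorem Nat.sum_mul_sum_multinomial_sub_single {ι : Type*} [Fintype ι] [DecidableEq ι]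
    (α w : ι → ℕ) :
    (∑ i, α i) * ∑ j with α j ≠ 0, w j * Nat.multinomial univ (α - Pi.single j 1) =
      (∑ j, w j * α j) * Nat.multinomial univ α := by
  rw [Finset.mul_sum, Finset.sum_mul, ← Finset.sum_filter_of_ne (p := fun j => α j ≠ 0)
    fun j _ h => right_ne_zero_of_mul (left_ne_zero_of_mul h)]
  refine Finset.sum_congr rfl fun j hj => ?_
  rw [mul_left_comm, Nat.sum_mul_multinomial_sub_single (mem_filter.mp hj).2, mul_assoc]

theorem Fin.sum_ite_add_one_le_eq_sum_range {M : Type*} [AddCommMonoid M] {k n : ℕ}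
    (g : ℕ → M) (hg : ∀ i, k ≤ i → g i = 0) :
    (∑ j : Fin k, if j.1 + 1 ≤ n then g j else 0) = ∑ i ∈ range n, g i := by
  rw [Fin.sum_univ_eq_sum_range (fun i => if i + 1 ≤ n then g i else 0), ← Finset.sum_filter]
  refine Finset.sum_subset (fun i hi => ?_) fun i hi hi' => hg i ?_
  · simp only [mem_filter, mem_range] at hi ⊢; omega
  · simp only [mem_filter, mem_range] at hi hi' ⊢; omega

section Partitions

variable {k n : ℕ}

theorem mem_partitions {α : Fin k → ℕ} :
    α ∈ partitions k n ↔ ∑ j : Fin k, (j.1 + 1) * α j = n := by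
  refine ⟨fun h => (mem_filter.mp h).2, fun h => mem_filter.mpr ⟨?_, h⟩⟩
  refine Fintype.mem_piFinset.mpr fun j => mem_range.mpr (Nat.lt_succ_of_le ?_)
  calc α j ≤ (j.1 + 1) * α j := Nat.le_mul_of_pos_left _ j.1.succ_pos
    _ ≤ n := h ▸ Finset.single_le_sum (f := fun i : Fin k => (i.1 + 1) * α i)
        (fun _ _ => Nat.zero_le _) (mem_univ j)

theorem add_one_le_of_mem_partitions {α : Fin k → ℕ} (hα : α ∈ partitions k n) {j : Fin k}
    (hj : α j ≠ 0) : j.1 + 1 ≤ n :=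
  calc j.1 + 1 ≤ (j.1 + 1) * α j := Nat.le_mul_of_pos_right _ (Nat.pos_of_ne_zero hj)
    _ ≤ n := mem_partitions.mp hα ▸ Finset.single_le_sum
        (f := fun i : Fin k => (i.1 + 1) * α i) (fun _ _ => Nat.zero_le _) (mem_univ j)

theorem sum_ne_zero_of_mem_partitions {α : Fin k → ℕ} (hα : α ∈ partitions k n)
    (hn : n ≠ 0) : ∑ i, α i ≠ 0 := by
  intro h
  obtain ⟨j, -, hj⟩ :=
    Finset.exists_ne_zero_of_sum_ne_zero ((mem_partitions.mp hα).trans_ne hn)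
  exact hj (by simp [Finset.sum_eq_zero_iff.mp h j (mem_univ j)])

theorem partitions_zero : partitions k 0 = {0} := by
  ext α
  simp [mem_partitions, Finset.sum_eq_zero_iff, funext_iff]

theorem sum_add_one_mul_add_single (β : Fin k → ℕ) (j : Fin k) :
    ∑ i : Fin k, (i.1 + 1) * (β + Pi.single j 1 : Fin k → ℕ) i =
      ∑ i : Fin k, (i.1 + 1) * β i + (j.1 + 1) := by
  simp [mul_add, Finset.sum_add_distrib, Pi.single_apply]

theorem sum_partitions_filter_ne_zero {M : Type*} [AddCommMonoid M] {j : Fin k}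
    (hj : j.1 + 1 ≤ n) (f : (Fin k → ℕ) → M) :
    ∑ α ∈ partitions k n with α j ≠ 0, f α =
      ∑ β ∈ partitions k (n - (j.1 + 1)), f (β + Pi.single j 1) := by
  symm
  refine Finset.sum_nbij' (· + Pi.single j 1) (· - Pi.single j 1) (fun β hβ => ?_)
    (fun α hα => ?_) (fun β _ => add_tsub_cancel_right β _) (fun α hα => ?_) (fun _ _ => rfl)
  · rw [mem_partitions] at hβ
    rw [mem_filter, mem_partitions, sum_add_one_mul_add_single, hβ]
    simp only [Pi.add_apply, Pi.single_eq_same]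
    omega
  · rw [mem_filter, mem_partitions] at hα
    have := sum_add_one_mul_add_single (α - Pi.single j 1) j
    rw [sub_single_one_add_single_one hα.2, hα.1] at this
    rw [mem_partitions]
    omega
  · exact sub_single_one_add_single_one (mem_filter.mp hα).2

end Partitions

/-- Under the substitution `t_j = (-1)^(j-1) e_j` this becomes the complete homogeneous
symmetric polynomial `h_m`. -/
noncomputable def H (k m : ℕ) : MvPolynomial (Fin k) ℚ :=
  ∑ α ∈ partitions k m, C (Nat.multinomial univ α : ℚ) * ∏ j, X j ^ α j

section Recurrence

variable {k n : ℕ}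

theorem prod_X_pow_add_single (β : Fin k → ℕ) (j : Fin k) :
    ∏ i, (X i : MvPolynomial (Fin k) ℚ) ^ (β + Pi.single j 1 : Fin k → ℕ) i =
      X j * ∏ i, X i ^ β i := by
  simp only [Pi.add_apply, pow_add, Finset.prod_mul_distrib]
  rw [mul_comm, Fintype.prod_eq_single j fun i hi => by simp [hi]]
  simp

theorem sum_partitions_sum_multinomial_sub_single (w : Fin k → ℕ) :
    ∑ α ∈ partitions k n,
        C ((∑ j with α j ≠ 0, w j * Nat.multinomial univ (α - Pi.single j 1) : ℕ) : ℚ) *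
          ∏ i, X i ^ α i =
      ∑ j : Fin k, if j.1 + 1 ≤ n then C (w j : ℚ) * X j * H k (n - (j.1 + 1)) else 0 := by
  simp_rw [Nat.cast_sum, map_sum, Finset.sum_mul, Finset.sum_filter]
  rw [Finset.sum_comm]
  refine Finset.sum_congr rfl fun j _ => ?_
  rw [← Finset.sum_filter]
  split_ifs with hj
  · rw [sum_partitions_filter_ne_zero hj, H, Finset.mul_sum]
    refine Finset.sum_congr rfl fun β _ => ?_
    rw [add_tsub_cancel_right, prod_X_pow_add_single, Nat.cast_mul, map_mul]
    ring
  · refine Finset.sum_eq_zero fun α hα => ?_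
    rw [mem_filter] at hα
    exact absurd (add_one_le_of_mem_partitions hα.1 hα.2) hj

theorem cast_sum_multinomial_sub_single {α : Fin k → ℕ} (hα : α ∈ partitions k n)
    (hn : n ≠ 0) (w : Fin k → ℕ) :
    ((∑ j with α j ≠ 0, w j * Nat.multinomial univ (α - Pi.single j 1) : ℕ) : ℚ) =
      ((∑ j, w j * α j : ℕ) : ℚ) / (∑ i, α i : ℕ) * Nat.multinomial univ α := by
  have hα : ((∑ i, α i : ℕ) : ℚ) ≠ 0 :=
    Nat.cast_ne_zero.mpr (sum_ne_zero_of_mem_partitions hα hn)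
  rw [div_mul_eq_mul_div, eq_div_iff hα, mul_comm]
  exact_mod_cast Nat.sum_mul_sum_multinomial_sub_single α w

theorem H_zero : H k 0 = 1 := by
  simpa [H, partitions_zero] using Nat.multinomial_spec univ (0 : Fin k → ℕ)

theorem H_eq_sum (hn : n ≠ 0) :
    H k n = ∑ j : Fin k, if j.1 + 1 ≤ n then X j * H k (n - (j.1 + 1)) else 0 := by
  calc H k n = ∑ α ∈ partitions k n,
        C ((∑ j with α j ≠ 0, 1 * Nat.multinomial univ (α - Pi.single j 1) : ℕ) : ℚ) *
          ∏ i, X i ^ α i := by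
        refine Finset.sum_congr rfl fun α hα => ?_
        have hs : ((∑ i, α i : ℕ) : ℚ) ≠ 0 :=
          Nat.cast_ne_zero.mpr (sum_ne_zero_of_mem_partitions hα hn)
        simp_rw [cast_sum_multinomial_sub_single hα hn, one_mul, div_self hs, one_mul]
    _ = _ := by
        simpa using sum_partitions_sum_multinomial_sub_single (k := k) (n := n) fun _ => 1

theorem G_eq_sum (hn : n ≠ 0) :
    G k n = ∑ j : Fin k, if j.1 + 1 ≤ n then
      (j.1 + 1 : MvPolynomial (Fin k) ℚ) * X j * H k (n - (j.1 + 1)) else 0 := by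
  calc G k n = ∑ α ∈ partitions k n,
        C ((∑ j with α j ≠ 0, (j.1 + 1) * Nat.multinomial univ (α - Pi.single j 1) : ℕ) : ℚ) *
          ∏ i, X i ^ α i := by
        rw [G, if_neg hn]
        refine Finset.sum_congr rfl fun α hα => ?_
        rw [cast_sum_multinomial_sub_single hα hn, ← mem_partitions.mp hα,
          mul_comm (Nat.multinomial _ _ : ℚ)]
    _ = _ := by
        simpa using sum_partitions_sum_multinomial_sub_single (k := k) (n := n) fun j => j.1 + 1

end Recurrence

namespace MvPolynomial

variable {σ R : Type*} [Fintype σ] [CommRing R]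

theorem esymm_eq_zero_of_card_lt {n : ℕ} (h : Fintype.card σ < n) : esymm σ R n = 0 := by
  rw [esymm, Finset.powersetCard_eq_empty.mpr (by simpa using h), Finset.sum_empty]

variable (σ R) in
noncomputable def esymmSeries : PowerSeries (MvPolynomial σ R) :=
  PowerSeries.mk fun i => (-1) ^ i * esymm σ R i

theorem esymmSeries_mul_psum :
    esymmSeries σ R * PowerSeries.mk (fun m => if m = 0 then 0 else psum σ R m) =
      PowerSeries.mk fun m => (-1) ^ (m + 1) * m * esymm σ R m := by
  refine PowerSeries.ext fun n => ?_
  have hsq : ((-1) ^ (n + 1) * (-1) ^ (n + 1) : MvPolynomial σ R) = 1 := by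
    rw [← mul_pow]; simp
  rw [PowerSeries.coeff_mul, PowerSeries.coeff_mk, mul_assoc, mul_esymm_eq_sum σ R n,
    ← mul_assoc, hsq, one_mul, Finset.sum_filter]
  refine Finset.sum_congr rfl fun x hx => ?_
  have hx : x.1 + x.2 = n := mem_antidiagonal.mp hx
  simp only [esymmSeries, PowerSeries.coeff_mk]
  split_ifs <;> first | omega | ring

theorem esymmSeries_mul_mk_eq_one {h : ℕ → MvPolynomial σ R} (h0 : h 0 = 1)
    (hrec : ∀ m ≠ 0, h m = ∑ i ∈ range m, (-1) ^ i * esymm σ R (i + 1) * h (m - (i + 1))) :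
    esymmSeries σ R * PowerSeries.mk h = 1 := by
  refine PowerSeries.ext fun m => ?_
  rw [PowerSeries.coeff_mul, Finset.Nat.sum_antidiagonal_eq_sum_range_succ_mk,
    PowerSeries.coeff_one, Finset.sum_range_succ']
  simp only [esymmSeries, PowerSeries.coeff_mk]
  rcases eq_or_ne m 0 with rfl | hm
  · simp [h0]
  · rw [if_neg hm, Nat.sub_zero, hrec m hm, pow_zero, esymm_zero, one_mul, one_mul,
      ← Finset.sum_add_distrib]
    exact Finset.sum_eq_zero fun i _ => by ring

theorem psum_eq_sum_esymm_mul {h : ℕ → MvPolynomial σ R} (h0 : h 0 = 1)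
    (hrec : ∀ m ≠ 0, h m = ∑ i ∈ range m, (-1) ^ i * esymm σ R (i + 1) * h (m - (i + 1)))
    {n : ℕ} (hn : n ≠ 0) :
    psum σ R n =
      ∑ i ∈ range n, (i + 1) * ((-1) ^ i * esymm σ R (i + 1)) * h (n - (i + 1)) := by
  have hseries : PowerSeries.mk (fun m => if m = 0 then 0 else psum σ R m) =
      PowerSeries.mk (fun m => (-1) ^ (m + 1) * m * esymm σ R m) * PowerSeries.mk h := by
    rw [← esymmSeries_mul_psum, mul_right_comm, esymmSeries_mul_mk_eq_one h0 hrec, one_mul]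
  have := congrArg (PowerSeries.coeff n) hseries
  rw [PowerSeries.coeff_mk, if_neg hn, PowerSeries.coeff_mul,
    Finset.Nat.sum_antidiagonal_eq_sum_range_succ_mk, Finset.sum_range_succ'] at this
  simp only [PowerSeries.coeff_mk] at this
  rw [this, Nat.cast_zero, mul_zero, zero_mul, zero_mul, add_zero]
  exact Finset.sum_congr rfl fun i _ => by push_cast; ring

end MvPolynomial

theorem G_eq_power_sum_general (k n : ℕ) (hn : 1 ≤ n) :
    aeval (fun j : Fin k => (-1 : MvPolynomial (Fin k) ℚ) ^ j.1 * esymm (Fin k) ℚ (j.1 + 1))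
        (G k n) =
      psum (Fin k) ℚ n := by
  set φ : MvPolynomial (Fin k) ℚ →ₐ[ℚ] MvPolynomial (Fin k) ℚ :=
    aeval fun j : Fin k => (-1 : MvPolynomial (Fin k) ℚ) ^ j.1 * esymm (Fin k) ℚ (j.1 + 1)
  have hX (j : Fin k) : φ (X j) = (-1) ^ j.1 * esymm (Fin k) ℚ (j.1 + 1) := aeval_X _ j
  have hvanish (i : ℕ) (hi : k ≤ i) : esymm (Fin k) ℚ (i + 1) = 0 :=
    esymm_eq_zero_of_card_lt (by simpa using Nat.lt_succ_of_le hi)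
  have hrec (m : ℕ) (hm : m ≠ 0) : φ (H k m) =
      ∑ i ∈ range m, (-1) ^ i * esymm (Fin k) ℚ (i + 1) * φ (H k (m - (i + 1))) := by
    rw [H_eq_sum hm, map_sum,
      ← Fin.sum_ite_add_one_le_eq_sum_range _ fun i hi => by simp [hvanish i hi]]
    refine Finset.sum_congr rfl fun j _ => ?_
    split_ifs <;> simp [hX]
  rw [G_eq_sum (by omega), map_sum,
    psum_eq_sum_esymm_mul (by rw [H_zero, map_one]) hrec (by omega : n ≠ 0),
    ← Fin.sum_ite_add_one_le_eq_sum_range _ fun i hi => by simp [hvanish i hi]]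
  refine Finset.sum_congr rfl fun j _ => ?_
  split_ifs <;> simp [hX, mul_assoc]

theorem G_eq_power_sum (k n : ℕ) (hk : 1 ≤ k) (hn : 1 ≤ n) :
    aeval (fun j : Fin k => (-1 : MvPolynomial (Fin k) ℚ) ^ j.1 * esymm (Fin k) ℚ (j.1 + 1))
        (G k n) =
      psum (Fin k) ℚ n :=
  G_eq_power_sum_general k n hn
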